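/- Let K be a finite simplicial complex and F a field. Then K is tight over F if and only if for every r ≥ 1 the join Δ^[r] * K of K with an (r-1)-dimensional simplex (on r new vertices) is tight over F. -/
import Mathlib


/-- An (abstract) simplicial complex: a collection of finite subsets of `ℕ`
closed under taking subsets. -/
def IsComplex (K : Finset (Finset ℕ)) : Prop :=
  ∀ σ ∈ K, ∀ τ ⊆ σ, τ ∈ K

/-- The vertex set of a complex: the union of all its simplices. -/
def verts (K : Finset (Finset ℕ)) : Finset ℕ := K.sup id

/-- The space of (augmented) simplicial `j`-chains: formal `F`-linear combinations of
simplices of cardinality `j` (so chain degree `j` corresponds to dimension `j - 1`;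
degree `0` is spanned by the empty simplex). -/
abbrev Chain (F : Type*) [Field F] (K : Finset (Finset ℕ)) (j : ℕ) : Type _ :=
  {σ // σ ∈ K.filter (fun σ => σ.card = j)} → F

/-- The simplicial boundary operator (of the augmented chain complex), with the usual
signs `(-1)^{position of the deleted vertex}`. -/
noncomputable def bdry (F : Type*) [Field F] (K : Finset (Finset ℕ)) (j : ℕ) :
    Chain F K (j + 1) →ₗ[F] Chain F K j where
  toFun c := fun τ =>
    ∑ v ∈ verts K,
      if h : v ∉ τ.1 ∧ insert v τ.1 ∈ K.filter (fun σ => σ.card = j + 1) then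
        (-1 : F) ^ ((τ.1.filter (fun u => u < v)).card) * c ⟨insert v τ.1, h.2⟩
      else 0
  map_add' c d := by
    funext τ
    show _ = (_ : F) + (_ : F)
    rw [← Finset.sum_add_distrib]
    refine Finset.sum_congr rfl fun v _ => ?_
    by_cases h : v ∉ τ.1 ∧ insert v τ.1 ∈ K.filter (fun σ => σ.card = j + 1)
    · rw [dif_pos h, dif_pos h, dif_pos h, ← mul_add]
      rfl
    · rw [dif_neg h, dif_neg h, dif_neg h, add_zero]
  map_smul' a c := by
    funext τ
    show _ = a * _
    rw [Finset.mul_sum]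
    refine Finset.sum_congr rfl fun v _ => ?_
    by_cases h : v ∉ τ.1 ∧ insert v τ.1 ∈ K.filter (fun σ => σ.card = j + 1)
    · rw [dif_pos h, dif_pos h]
      show _ * (a * _) = _
      ring
    · rw [dif_neg h, dif_neg h, mul_zero]

/-- The dimension of the `j`-th homology of the augmented simplicial chain complex of `K`.
Degree `j` corresponds to the reduced homology group `H̃_{j-1}` of the realization of `K`. -/
noncomputable def hBetti (F : Type*) [Field F] (K : Finset (Finset ℕ)) : ℕ → ℕ
  | 0 => Module.finrank F (Chain F K 0) - Module.finrank F (LinearMap.range (bdry F K 0))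
  | j + 1 =>
      Module.finrank F (LinearMap.ker (bdry F K j)) -
        Module.finrank F (LinearMap.range (bdry F K (j + 1)))

/-- The reduced total Betti number `t̃b(K; F) = ∑ i dim H̃ i (K; F)` of (the geometric
realization of) `K`, with the convention `t̃b(∅; F) = 1` (coming from `β̃₋₁(∅) = 1`;
note that if `K` is nonempty and closed under subsets then `∅ ∈ K` and the augmented
chain complex accounts for `β̃₋₁` automatically). -/
noncomputable def rtb (F : Type*) [Field F] (K : Finset (Finset ℕ)) : ℕ :=
  if K = ∅ then 1 else ∑ j ∈ Finset.range ((verts K).card + 1), hBetti F K j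

/-- The full subcomplex `K|_J` of `K` on a vertex set `J`. -/
def restr (K : Finset (Finset ℕ)) (J : Finset ℕ) : Finset (Finset ℕ) :=
  K.filter (fun σ => σ ⊆ J)

/-- The total bigraded Betti number `D̃(K; F) = ∑_{J ⊆ V} t̃b(K|_J; F)`
with respect to a ground vertex set `V`. -/
noncomputable def Dtilde (F : Type*) [Field F] (V : Finset ℕ) (K : Finset (Finset ℕ)) : ℕ :=
  ∑ J ∈ V.powerset, rtb F (restr K J)


/-- The `k`-skeleton `Δ^[m]_(k)` of the full simplex on the vertex set
`[m] = {0, 1, …, m-1}`: all subsets of cardinality at most `k + 1`. -/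
def skel (m k : ℕ) : Finset (Finset ℕ) :=
  (Finset.range m).powerset.filter (fun σ => σ.card ≤ k + 1)

/-- The `k`-skeleton of the full simplex on `[m]` for an integer `k`
(so `k = -1` gives the empty complex `{∅}`). -/
def skelZ (m : ℕ) (k : ℤ) : Finset (Finset ℕ) :=
  (Finset.range m).powerset.filter (fun σ => (σ.card : ℤ) ≤ k + 1)

/-- `Δ^[m]_(k)⟨d⟩`: the union of the `k`-skeleton of the full simplex on `[m]`
with the single `d`-simplex `{0, 1, …, d}` and all its faces. -/
def skelD (m k d : ℕ) : Finset (Finset ℕ) :=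
  skel m k ∪ (Finset.range (d + 1)).powerset

/-- `K` and `L` are isomorphic simplicial complexes: some injection of the vertex
set of `K` maps the simplices of `K` exactly onto the simplices of `L`. -/
def SIso (K L : Finset (Finset ℕ)) : Prop :=
  ∃ f : ℕ → ℕ, Set.InjOn f ↑(verts K) ∧ L = K.image (fun σ => σ.image f)

/-- `g(m,d) = ∑_{j=d+1}^{m} C(m,j)·C(j-1,d)`. -/
def g (m d : ℕ) : ℕ := ∑ j ∈ Finset.Icc (d + 1) m, m.choose j * (j - 1).choose d

/-- The join `K * L` of two simplicial complexes (on disjoint vertex sets). -/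
def sJoin (K L : Finset (Finset ℕ)) : Finset (Finset ℕ) :=
  (K ×ˢ L).image fun p => p.1 ∪ p.2

/-- A `d`-dimensional simplicial complex `K` with `m` vertices is tight over `F` if
`D̃(K;F) = 2^{m-d-1}` (note `m - d - 1 = m - (d+1)` and `d + 1 = max σ∈K |σ|`),
where `D̃` is computed with respect to the vertex set of `K`. -/
def IsTight (F : Type*) [Field F] (K : Finset (Finset ℕ)) : Prop :=
  Dtilde F (verts K) K = 2 ^ ((verts K).card - K.sup Finset.card)

/-- The link of a simplex `σ` in `K`. -/
def linkK (K : Finset (Finset ℕ)) (σ : Finset ℕ) : Finset (Finset ℕ) :=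
  K.filter (fun τ => Disjoint τ σ ∧ τ ∪ σ ∈ K)

/-- `K` is pure: every maximal simplex has the maximum cardinality `dim K + 1`. -/
def IsPure (K : Finset (Finset ℕ)) : Prop :=
  ∀ σ ∈ K, (∀ τ ∈ K, σ ⊆ τ → σ = τ) → σ.card = K.sup Finset.card

/-- A near-cone (with apex vertex `0`): for every simplex `S` with `0 ∉ S` and every
`j ∈ S`, `(S \ j) ∪ {0}` is again a simplex. -/
def IsNearCone (Δ : Finset (Finset ℕ)) : Prop :=
  ∀ S ∈ Δ, 0 ∉ S → ∀ j ∈ S, insert 0 (S.erase j) ∈ Δ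

/-- `B(Δ) = {S ∈ Δ : S ∪ {0} ∉ Δ}` for a near-cone `Δ` with apex `0`. -/
def BSet (Δ : Finset (Finset ℕ)) : Finset (Finset ℕ) :=
  Δ.filter (fun S => insert 0 S ∉ Δ)

/-- A Sperner family of the finite set `X`: a family of subsets of `X`, no member
containing another member. -/
def IsSperner (X : Finset ℕ) (F : Finset (Finset ℕ)) : Prop :=
  (∀ A ∈ F, A ⊆ X) ∧ ∀ A ∈ F, ∀ B ∈ F, A ⊆ B → A = B

/-- The geometric realization of `K` is disconnected: the vertex set splits into two
nonempty parts such that every simplex lies entirely in one of the parts. -/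
def IsDisconn (K : Finset (Finset ℕ)) : Prop :=
  ∃ A B : Finset ℕ, A.Nonempty ∧ B.Nonempty ∧ Disjoint A B ∧ A ∪ B = verts K ∧
    ∀ σ ∈ K, σ ⊆ A ∨ σ ⊆ B

/-- The boundary `∂Δ^A` of the full simplex on the vertex set `A`: all proper subsets
of `A`.  (For `|A| = 1` this is the empty complex `{∅}`.) -/
def bdSimplex (A : Finset ℕ) : Finset (Finset ℕ) := A.powerset.erase A



section Cone
variable (F : Type*) [Field F] (L : Finset (Finset ℕ)) (v : ℕ)

lemma chain_congr {F : Type*} [Field F] {L : Finset (Finset ℕ)} {j : ℕ}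
    (c : Chain F L j) {s t : Finset ℕ} (hs : s ∈ L.filter (fun σ => σ.card = j))
    (ht : t ∈ L.filter (fun σ => σ.card = j)) (h : s = t) :
    c ⟨s, hs⟩ = c ⟨t, ht⟩ := by subst h; rfl

lemma bdry_apply (j : ℕ) (c : Chain F L (j+1)) (τ : {σ // σ ∈ L.filter (fun σ => σ.card = j)}) :
    bdry F L j c τ = ∑ u ∈ verts L,
      if h : u ∉ τ.1 ∧ insert u τ.1 ∈ L.filter (fun σ => σ.card = j + 1) then
        (-1 : F) ^ ((τ.1.filter (fun w => w < u)).card) * c ⟨insert u τ.1, h.2⟩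
      else 0 := rfl

/-- The standard contraction of the (augmented) chain complex of a cone. -/
def hmap (hL : IsComplex L) (j : ℕ) (c : Chain F L j) : Chain F L (j+1) :=
  fun σ => if h : v ∈ σ.1 then
    (-1 : F) ^ (((σ.1.erase v).filter (fun w => w < v)).card) *
      c ⟨σ.1.erase v, by
        have h2 := Finset.mem_filter.mp σ.2
        exact Finset.mem_filter.mpr ⟨hL _ h2.1 _ (Finset.erase_subset _ _),
          by rw [Finset.card_erase_of_mem h, h2.2]; rfl⟩⟩
  else 0
end Cone
section Cone2
variable (F : Type*) [Field F] (L : Finset (Finset ℕ)) (v : ℕ)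

lemma mcount_insert (s : Finset ℕ) (a w : ℕ) (ha : a ∉ s) :
    ((insert a s).filter (fun x => x < w)).card
      = (s.filter (fun x => x < w)).card + (if a < w then 1 else 0) := by
  rw [Finset.filter_insert]
  split
  · rw [Finset.card_insert_of_notMem (fun hmem => ha (Finset.mem_filter.mp hmem).1)]
  · rw [add_zero]

lemma hmap_zero (hL : IsComplex L) (j : ℕ) : hmap F L v hL j 0 = 0 := by
  funext σ
  unfold hmap
  split
  · show _ * (0:F) = 0; rw [mul_zero]
  · rfl

lemma caseB (hL : IsComplex L) (hv : ∀ σ ∈ L, insert v σ ∈ L) (j : ℕ) (c : Chain F L j)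
    (τ : {σ // σ ∈ L.filter (fun σ => σ.card = j)}) (hvτ : v ∉ τ.1) :
    bdry F L j (hmap F L v hL j c) τ = c τ := by
  have hτL : τ.1 ∈ L := (Finset.mem_filter.mp τ.2).1
  have hτc : τ.1.card = j := (Finset.mem_filter.mp τ.2).2
  have hvV : v ∈ verts L :=
    Finset.mem_sup.mpr ⟨insert v τ.1, hv _ hτL, Finset.mem_insert_self v _⟩
  rw [bdry_apply, Finset.sum_eq_single v]
  · have hcond : v ∉ τ.1 ∧ insert v τ.1 ∈ L.filter (fun σ => σ.card = j+1) :=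
      ⟨hvτ, Finset.mem_filter.mpr ⟨hv _ hτL,
        by rw [Finset.card_insert_of_notMem hvτ, hτc]⟩⟩
    rw [dif_pos hcond]
    unfold hmap
    rw [dif_pos (Finset.mem_insert_self v τ.1)]
    have he : (insert v τ.1).erase v = τ.1 := Finset.erase_insert hvτ
    simp only [he]
    rw [← mul_assoc, ← pow_add, Even.neg_one_pow ⟨_, rfl⟩, one_mul]
  · intro u _ huv
    by_cases hcond : u ∉ τ.1 ∧ insert u τ.1 ∈ L.filter (fun σ => σ.card = j+1)
    · rw [dif_pos hcond]
      unfold hmap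
      rw [dif_neg (by simp [huv.symm, hvτ] : v ∉ insert u τ.1), mul_zero]
    · rw [dif_neg hcond]
  · intro h; exact absurd hvV h

end Cone2
section Cone3
variable (F : Type*) [Field F] (L : Finset (Finset ℕ)) (v : ℕ)

lemma caseA (hL : IsComplex L) (hv : ∀ σ ∈ L, insert v σ ∈ L) (j : ℕ) (c : Chain F L (j+1))
    (τ : {σ // σ ∈ L.filter (fun σ => σ.card = j+1)}) (hvτ : v ∈ τ.1) :
    bdry F L (j+1) (hmap F L v hL (j+1) c) τ + hmap F L v hL j (bdry F L j c) τ = c τ := by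
  have hτL : τ.1 ∈ L := (Finset.mem_filter.mp τ.2).1
  have hτc : τ.1.card = j + 1 := (Finset.mem_filter.mp τ.2).2
  have hvV : v ∈ verts L := Finset.mem_sup.mpr ⟨τ.1, hτL, hvτ⟩
  have hve : v ∉ τ.1.erase v := Finset.notMem_erase v τ.1
  have heL : τ.1.erase v ∈ L := hL _ hτL _ (Finset.erase_subset _ _)
  have hec : (τ.1.erase v).card = j := by rw [Finset.card_erase_of_mem hvτ, hτc]; rfl
  have hτe : insert v (τ.1.erase v) = τ.1 := Finset.insert_erase hvτ
  -- unfold the second term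
  conv_lhs => rw [show hmap F L v hL j (bdry F L j c) τ
    = (-1 : F) ^ (((τ.1.erase v).filter (fun w => w < v)).card) *
      (bdry F L j c) ⟨τ.1.erase v, Finset.mem_filter.mpr ⟨heL, hec⟩⟩ from dif_pos hvτ]
  rw [bdry_apply, bdry_apply, Finset.mul_sum, ← Finset.sum_add_distrib,
    Finset.sum_eq_single v]
  · -- diagonal term u = v
    rw [dif_neg (fun hc => hc.1 hvτ)]
    have hcond : v ∉ τ.1.erase v ∧ insert v (τ.1.erase v) ∈ L.filter (fun σ => σ.card = j+1) :=
      ⟨hve, by rw [hτe]; exact τ.2⟩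
    rw [dif_pos hcond, zero_add, ← mul_assoc, ← pow_add, Even.neg_one_pow ⟨_, rfl⟩, one_mul]
    exact chain_congr c _ _ hτe
  · -- off-diagonal terms
    intro u _ huv
    by_cases hcond2 : u ∉ τ.1.erase v ∧ insert u (τ.1.erase v) ∈ L.filter (fun σ => σ.card = j+1)
    · have huτ : u ∉ τ.1 := fun h =>
        hcond2.1 (Finset.mem_erase.mpr ⟨huv, h⟩)
      have hins : insert u τ.1 ∈ L := by
        rw [← hτe, Finset.insert_comm]
        exact hv _ (Finset.mem_filter.mp hcond2.2).1
      have hcond1 : u ∉ τ.1 ∧ insert u τ.1 ∈ L.filter (fun σ => σ.card = j+2) :=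
        ⟨huτ, Finset.mem_filter.mpr ⟨hins, by rw [Finset.card_insert_of_notMem huτ, hτc]⟩⟩
      rw [dif_pos hcond1, dif_pos hcond2]
      unfold hmap
      have hvin : v ∈ insert u τ.1 := Finset.mem_insert_of_mem hvτ
      rw [dif_pos hvin]
      have herase : (insert u τ.1).erase v = insert u (τ.1.erase v) :=
        Finset.erase_insert_of_ne huv
      simp only [herase]
      -- sign bookkeeping
      have hm1 : (((insert u (τ.1.erase v))).filter (fun w => w < v)).card
          = ((τ.1.erase v).filter (fun w => w < v)).card + (if u < v then 1 else 0) :=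
        mcount_insert _ u v hcond2.1
      have hm2 : (τ.1.filter (fun w => w < u)).card
          = ((τ.1.erase v).filter (fun w => w < u)).card + (if v < u then 1 else 0) := by
        conv_lhs => rw [← hτe]
        exact mcount_insert _ v u hve
      rw [hm1, hm2]
      set a := ((τ.1.erase v).filter (fun w => w < u)).card
      set b := ((τ.1.erase v).filter (fun w => w < v)).card
      set X := c ⟨insert u (τ.1.erase v), hcond2.2⟩
      have hpq : (if v < u then 1 else 0) + (if u < v then 1 else 0) = 1 := by
        rcases lt_trichotomy u v with h | h | h
        · simp [h, asymm h]
        · exact absurd h huv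
        · simp [h, asymm h]
      rw [← mul_assoc, ← pow_add, ← mul_assoc, ← pow_add]
      have hexp : a + (if v < u then 1 else 0) + (b + (if u < v then 1 else 0))
          = (b + a) + 1 := by omega
      rw [hexp, pow_succ]
      ring
    · have hcond1 : ¬(u ∉ τ.1 ∧ insert u τ.1 ∈ L.filter (fun σ => σ.card = j+2)) := by
        intro hcond1
        apply hcond2
        refine ⟨fun h => hcond1.1 (Finset.mem_of_mem_erase h), Finset.mem_filter.mpr
          ⟨hL _ (Finset.mem_filter.mp hcond1.2).1 _
            (Finset.insert_subset_insert _ (Finset.erase_subset _ _)), ?_⟩⟩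
        rw [Finset.card_insert_of_notMem (fun h => hcond1.1 (Finset.mem_of_mem_erase h)), hec]
      rw [dif_neg hcond1, dif_neg hcond2, mul_zero, add_zero]
  · intro h; exact absurd hvV h

end Cone3
section Cone4
variable (F : Type*) [Field F] (L : Finset (Finset ℕ)) (v : ℕ)

lemma homotopy (hL : IsComplex L) (hv : ∀ σ ∈ L, insert v σ ∈ L) (j : ℕ) (c : Chain F L (j+1))
    (hc : bdry F L j c = 0) : bdry F L (j+1) (hmap F L v hL (j+1) c) = c := by
  funext τ
  by_cases hvτ : v ∈ τ.1
  · have := caseA F L v hL hv j c τ hvτ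
    rw [hc, hmap_zero] at this
    simpa using this
  · exact caseB F L v hL hv (j+1) c τ hvτ

lemma ker_le_range (hL : IsComplex L) (hv : ∀ σ ∈ L, insert v σ ∈ L) (j : ℕ) :
    LinearMap.ker (bdry F L j) ≤ LinearMap.range (bdry F L (j+1)) := by
  intro c hc
  exact ⟨hmap F L v hL (j+1) c, homotopy F L v hL hv j c (LinearMap.mem_ker.mp hc)⟩

lemma range_top (hL : IsComplex L) (hv : ∀ σ ∈ L, insert v σ ∈ L) :
    LinearMap.range (bdry F L 0) = ⊤ := by
  rw [LinearMap.range_eq_top]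
  intro c
  refine ⟨hmap F L v hL 0 c, funext fun τ => ?_⟩
  exact caseB F L v hL hv 0 c τ (by
    have : τ.1.card = 0 := (Finset.mem_filter.mp τ.2).2
    simp [Finset.card_eq_zero.mp this])

lemma hBetti_cone (hL : IsComplex L) (hv : ∀ σ ∈ L, insert v σ ∈ L) (i : ℕ) :
    hBetti F L i = 0 := by
  cases i with
  | zero =>
      show Module.finrank F (Chain F L 0) - Module.finrank F (LinearMap.range (bdry F L 0)) = 0
      rw [range_top F L v hL hv, finrank_top, Nat.sub_self]
  | succ j =>
      show Module.finrank F (LinearMap.ker (bdry F L j)) -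
        Module.finrank F (LinearMap.range (bdry F L (j+1))) = 0
      exact Nat.sub_eq_zero_of_le (Submodule.finrank_mono (ker_le_range F L v hL hv j))

lemma rtb_cone (hL : IsComplex L) (hne : L ≠ ∅) (hv : ∀ σ ∈ L, insert v σ ∈ L) :
    rtb F L = 0 := by
  rw [rtb, if_neg hne]
  exact Finset.sum_eq_zero fun i _ => hBetti_cone F L v hL hv i

end Cone4
section Join
variable (F : Type*) [Field F] (K : Finset (Finset ℕ)) (A : Finset ℕ)

lemma mem_sJoin_iff (hK : IsComplex K) (σ : Finset ℕ) :
    σ ∈ sJoin A.powerset K ↔ σ \ A ∈ K := by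
  constructor
  · intro h
    rw [sJoin, Finset.mem_image] at h
    obtain ⟨⟨α, τ⟩, hmem, rfl⟩ := h
    rw [Finset.mem_product] at hmem
    have hα : α ⊆ A := Finset.mem_powerset.mp hmem.1
    refine hK _ hmem.2 _ ?_
    intro x hx
    rw [Finset.mem_sdiff, Finset.mem_union] at hx
    rcases hx.1 with h' | h'
    · exact absurd (hα h') hx.2
    · exact h'
  · intro h
    rw [sJoin, Finset.mem_image]
    exact ⟨(σ ∩ A, σ \ A),
      Finset.mem_product.mpr ⟨Finset.mem_powerset.mpr Finset.inter_subset_right, h⟩,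
      sup_inf_sdiff σ A⟩

lemma sJoin_isComplex (hK : IsComplex K) : IsComplex (sJoin A.powerset K) := by
  intro σ hσ τ hτ
  rw [mem_sJoin_iff K A hK] at *
  exact hK _ hσ _ (Finset.sdiff_subset_sdiff hτ (Finset.Subset.refl A))

lemma restr_isComplex (hK : IsComplex K) (J : Finset ℕ) : IsComplex (restr K J) := by
  intro σ hσ τ hτ
  rw [restr, Finset.mem_filter] at *
  exact ⟨hK _ hσ.1 _ hτ, hτ.trans hσ.2⟩

lemma empty_mem (hK : IsComplex K) (hne : K ≠ ∅) : ∅ ∈ K := by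
  obtain ⟨σ, hσ⟩ := Finset.nonempty_iff_ne_empty.mpr hne
  exact hK _ hσ _ (Finset.empty_subset _)

lemma subset_verts {σ : Finset ℕ} (h : σ ∈ K) : σ ⊆ verts K := Finset.le_sup (f := id) h

lemma verts_sJoin (hK : IsComplex K) (hne : K ≠ ∅) :
    verts (sJoin A.powerset K) = A ∪ verts K := by
  apply Finset.Subset.antisymm
  · intro x hx
    obtain ⟨σ, hσ, hxσ⟩ := Finset.mem_sup.mp hx
    rw [mem_sJoin_iff K A hK] at hσ
    have hx := hxσ
    rw [Finset.mem_union]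
    by_cases hxA : x ∈ A
    · exact Or.inl hxA
    · exact Or.inr (subset_verts K hσ (Finset.mem_sdiff.mpr ⟨hx, hxA⟩))
  · apply Finset.union_subset
    · intro a ha
      refine Finset.mem_sup.mpr ⟨{a}, ?_, Finset.mem_singleton_self a⟩
      rw [mem_sJoin_iff K A hK]
      have : ({a} : Finset ℕ) \ A = ∅ := Finset.sdiff_eq_empty_iff_subset.mpr (by simp [ha])
      rw [this]
      exact empty_mem K hK hne
    · intro x hx
      obtain ⟨σ, hσ, hxσ⟩ := Finset.mem_sup.mp hx
      refine Finset.mem_sup.mpr ⟨σ, ?_, hxσ⟩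
      rw [mem_sJoin_iff K A hK]
      exact hK _ hσ _ Finset.sdiff_subset

lemma sup_sJoin (hK : IsComplex K) (hne : K ≠ ∅) (hdisj : Disjoint A (verts K)) :
    (sJoin A.powerset K).sup Finset.card = A.card + K.sup Finset.card := by
  apply le_antisymm
  · apply Finset.sup_le
    intro σ hσ
    rw [mem_sJoin_iff K A hK] at hσ
    calc σ.card = (σ ∩ A).card + (σ \ A).card := (Finset.card_inter_add_card_sdiff σ A).symm
    _ ≤ A.card + K.sup Finset.card :=
        Nat.add_le_add (Finset.card_le_card Finset.inter_subset_right)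
          (Finset.le_sup (f := Finset.card) hσ)
  · obtain ⟨σ, hσ, hsup⟩ :=
      Finset.exists_mem_eq_sup K (Finset.nonempty_iff_ne_empty.mpr hne) Finset.card
    have hσA : Disjoint σ A := (hdisj.mono_right (subset_verts K hσ)).symm
    have hmem : A ∪ σ ∈ sJoin A.powerset K := by
      rw [mem_sJoin_iff K A hK, Finset.union_sdiff_cancel_left hσA.symm]
      exact hσ
    calc A.card + K.sup Finset.card = (A ∪ σ).card := by
          rw [hsup, Finset.card_union_of_disjoint (hσA.symm)]
    _ ≤ _ := Finset.le_sup (f := Finset.card) hmem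

end Join
section Dt
variable (F : Type*) [Field F] (K : Finset (Finset ℕ)) (A : Finset ℕ)

lemma restr_sJoin_of_disjoint (hK : IsComplex K) {J : Finset ℕ} (hJ : Disjoint J A) :
    restr (sJoin A.powerset K) J = restr K J := by
  ext σ
  simp only [restr, Finset.mem_filter]
  constructor
  · rintro ⟨h1, h2⟩
    rw [mem_sJoin_iff K A hK] at h1
    rw [Finset.sdiff_eq_self_of_disjoint (hJ.mono_left h2)] at h1
    exact ⟨h1, h2⟩
  · rintro ⟨h1, h2⟩
    refine ⟨?_, h2⟩
    rw [mem_sJoin_iff K A hK, Finset.sdiff_eq_self_of_disjoint (hJ.mono_left h2)]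
    exact h1

lemma rtb_restr_sJoin_cone (hK : IsComplex K) (hne : K ≠ ∅) {J : Finset ℕ}
    {v : ℕ} (hvJ : v ∈ J) (hvA : v ∈ A) :
    rtb F (restr (sJoin A.powerset K) J) = 0 := by
  apply rtb_cone F _ v (restr_isComplex _ (sJoin_isComplex K A hK) J)
  · apply Finset.ne_empty_of_mem (a := (∅ : Finset ℕ))
    rw [restr, Finset.mem_filter, mem_sJoin_iff K A hK]
    simpa using empty_mem K hK hne
  · intro σ hσ
    rw [restr, Finset.mem_filter, mem_sJoin_iff K A hK] at *
    refine ⟨?_, Finset.insert_subset hvJ hσ.2⟩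
    rw [Finset.insert_sdiff_of_mem _ hvA]
    exact hσ.1

lemma Dtilde_sJoin (hK : IsComplex K) (hne : K ≠ ∅) (hdisj : Disjoint A (verts K)) :
    Dtilde F (A ∪ verts K) (sJoin A.powerset K) = Dtilde F (verts K) K := by
  unfold Dtilde
  rw [← Finset.sum_filter_add_sum_filter_not ((A ∪ verts K).powerset)
    (fun J => Disjoint J A)]
  have h1 : ((A ∪ verts K).powerset.filter fun J => Disjoint J A) = (verts K).powerset := by
    ext J
    simp only [Finset.mem_filter, Finset.mem_powerset]
    constructor
    · rintro ⟨hJ, hd⟩ x hx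
      rcases Finset.mem_union.mp (hJ hx) with h | h
      · exact absurd h (Finset.disjoint_left.mp hd hx)
      · exact h
    · intro hJ
      exact ⟨hJ.trans Finset.subset_union_right, (hdisj.mono_right hJ).symm⟩
  rw [h1]
  have h2 := Finset.sum_congr (rfl : (verts K).powerset = (verts K).powerset)
    (fun J hJ => congrArg (rtb F) (restr_sJoin_of_disjoint K A hK
      ((hdisj.mono_right (Finset.mem_powerset.mp hJ)).symm)))
  rw [h2]
  have h3 : ∀ J ∈ ((A ∪ verts K).powerset.filter fun J => ¬ Disjoint J A),
      rtb F (restr (sJoin A.powerset K) J) = 0 := by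
    intro J hJ
    have hnd := (Finset.mem_filter.mp hJ).2
    obtain ⟨v, hvJ, hvA⟩ := Finset.not_disjoint_iff.mp hnd
    exact rtb_restr_sJoin_cone F K A hK hne hvJ hvA
  rw [Finset.sum_congr rfl h3]
  simp

lemma tight_sJoin_iff (hK : IsComplex K) (hA : A.Nonempty) (hdisj : Disjoint A (verts K)) :
    IsTight F (sJoin A.powerset K) ↔ IsTight F K := by
  by_cases hne : K = ∅
  · subst hne
    have hj : sJoin A.powerset (∅ : Finset (Finset ℕ)) = ∅ := by
      simp [sJoin]
    rw [hj]
  · unfold IsTight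
    rw [verts_sJoin K A hK hne, sup_sJoin K A hK hne hdisj,
      Dtilde_sJoin F K A hK hne hdisj, Finset.card_union_of_disjoint hdisj,
      Nat.add_sub_add_left]

end Dt
/-- `K` is tight over `F` iff for every `r ≥ 1`, the join of `K` with a
full simplex on `r` new vertices is tight over `F`. -/
theorem stmt13 (F : Type*) [Field F] (K : Finset (Finset ℕ)) (hK : IsComplex K) :
    IsTight F K ↔
      ∀ r : ℕ, 1 ≤ r → ∀ A : Finset ℕ, A.card = r → Disjoint A (verts K) →
        IsTight F (sJoin A.powerset K) := by
  constructor
  · intro h r hr A hcard hdisj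
    have hA : A.Nonempty := Finset.card_pos.mp (hcard ▸ hr)
    exact (tight_sJoin_iff F K A hK hA hdisj).mpr h
  · intro h
    obtain ⟨a, ha⟩ := Finset.exists_notMem (verts K)
    have := h 1 le_rfl {a} (Finset.card_singleton a) (Finset.disjoint_singleton_left.mpr ha)
    exact (tight_sJoin_iff F K {a} hK ⟨a, Finset.mem_singleton_self a⟩
      (Finset.disjoint_singleton_left.mpr ha)).mp this
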